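/- arXiv:1111.5051 — 2 statements merged into one kernel-verified Lean document; each statement's English description precedes it below -/
import Mathlib

section
/- Let n ≥ 3 and let a ∈ Sym(n,ℂ) with real part Re(a) positive definite. Define p(ξ) = aξ·ξ (bilinear) for ξ ∈ ℂⁿ. Then for ξ, N ∈ ℝⁿ \ {0}, the quadratic polynomial τ ↦ p(ξ + τN) in the complex variable τ never admits a double root τ₀ unless ξ + τ₀N = 0. -/
/-!
Write `τ₀ = u + iv` and `q(τ) = p(ξ + τN)`. A double root means `q(τ) = p(N) (τ - τ₀)²`, so at the
real point `u` we get `p(ξ + uN) = -v² p(N)`. Taking real parts, the left side is `≥ 0` and the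
right side `≤ 0` by positivity of `Re a` on real vectors, which forces `ξ + uN = 0` and `v = 0`.
-/

open Complex

namespace Matrix

variable {ι R : Type*} [Fintype ι]

def bilin [CommSemiring R] (a : Matrix ι ι R) (x y : ι → R) : R :=
  ∑ i, ∑ j, a i j * x i * y j

section CommRing

variable [CommRing R] (a : Matrix ι ι R)

@[simp]
theorem bilin_zero_left (y : ι → R) : a.bilin 0 y = 0 := by
  simp [bilin]

theorem bilin_add_smul_self (y N : ι → R) (s : R) :
    a.bilin (y + s • N) (y + s • N) =
      a.bilin y y + s * (a.bilin N y + a.bilin y N) + s ^ 2 * a.bilin N N := by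
  simp only [bilin, Pi.add_apply, Pi.smul_apply, smul_eq_mul, Finset.mul_sum,
    ← Finset.sum_add_distrib]
  exact Finset.sum_congr rfl fun i _ => Finset.sum_congr rfl fun j _ => by ring

end CommRing

theorem hasDerivAt_bilin_line {𝕜 : Type*} [NontriviallyNormedField 𝕜] (a : Matrix ι ι 𝕜)
    (x N : ι → 𝕜) (τ : 𝕜) :
    HasDerivAt (fun σ : 𝕜 => a.bilin (x + σ • N) (x + σ • N))
      (a.bilin N (x + τ • N) + a.bilin (x + τ • N) N) τ := by
  have hline : ∀ i, HasDerivAt (fun σ : 𝕜 => x i + σ * N i) (N i) τ := fun i => by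
    simpa using ((hasDerivAt_id τ).mul_const (N i)).const_add (x i)
  simp only [bilin, Pi.add_apply, Pi.smul_apply, smul_eq_mul, ← Finset.sum_add_distrib]
  exact HasDerivAt.fun_sum fun i _ => HasDerivAt.fun_sum fun j _ =>
    ((hline i).const_mul (a i j)).fun_mul (hline j)

theorem re_bilin_ofReal (a : Matrix ι ι ℂ) (x y : ι → ℝ) :
    (a.bilin (ofReal ∘ x) (ofReal ∘ y)).re = (a.map re).bilin x y := by
  simp [bilin, re_sum, mul_re]

theorem eq_zero_of_bilin_eq_neg_sq_mul [CommRing R] [LinearOrder R] [IsStrictOrderedRing R]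
    {b : Matrix ι ι R} (hb : ∀ x, x ≠ 0 → 0 < b.bilin x x) {w N : ι → R} (hN : N ≠ 0) {v : R}
    (h : b.bilin w w = -v ^ 2 * b.bilin N N) : w = 0 ∧ v = 0 := by
  have hbN := hb N hN
  have hw : w = 0 := by
    by_contra hw
    nlinarith [hb w hw, sq_nonneg v]
  rw [hw, bilin_zero_left] at h
  refine ⟨hw, pow_eq_zero_iff two_ne_zero |>.mp ?_⟩
  nlinarith [sq_nonneg v]

end Matrix

open Matrix in
theorem no_double_root_dim_ge_three_general
    {n : ℕ} (a : Matrix (Fin n) (Fin n) ℂ)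
    (ha_pos : ∀ ξ : Fin n → ℝ, ξ ≠ 0 → 0 < ∑ i, ∑ j, (a i j).re * ξ i * ξ j)
    (ξ N : Fin n → ℝ) (hN : N ≠ 0) (τ₀ : ℂ)
    (hroot : (∑ i, ∑ j, a i j * ((ξ i : ℂ) + τ₀ * (N i : ℂ)) * ((ξ j : ℂ) + τ₀ * (N j : ℂ))) = 0)
    (hdouble : deriv (fun τ : ℂ =>
      ∑ i, ∑ j, a i j * ((ξ i : ℂ) + τ * (N i : ℂ)) * ((ξ j : ℂ) + τ * (N j : ℂ))) τ₀ = 0) :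
    ∀ i, (ξ i : ℂ) + τ₀ * (N i : ℂ) = 0 := by
  set z : Fin n → ℂ := ofReal ∘ ξ + τ₀ • (ofReal ∘ N)
  have hD : a.bilin (ofReal ∘ N) z + a.bilin z (ofReal ∘ N) = 0 :=
    (hasDerivAt_bilin_line a (ofReal ∘ ξ) (ofReal ∘ N) τ₀).deriv ▸ hdouble
  have hreal : z + (-(τ₀.im * I)) • (ofReal ∘ N) = ofReal ∘ (ξ + τ₀.re • N) := by
    ext i
    simp only [z, Pi.add_apply, Pi.smul_apply, Function.comp_apply, smul_eq_mul, ofReal_add,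
      ofReal_mul]
    linear_combination -(N i : ℂ) * re_add_im τ₀
  have hvalue : a.bilin (ofReal ∘ (ξ + τ₀.re • N)) (ofReal ∘ (ξ + τ₀.re • N))
      = ((-τ₀.im ^ 2 : ℝ) : ℂ) * a.bilin (ofReal ∘ N) (ofReal ∘ N) := by
    rw [← hreal, bilin_add_smul_self, hD, show a.bilin z z = 0 from hroot]
    push_cast
    linear_combination (τ₀.im ^ 2 * a.bilin (ofReal ∘ N) (ofReal ∘ N) : ℂ) * I_sq
  have hre := congrArg re hvalue
  rw [re_bilin_ofReal, re_ofReal_mul, re_bilin_ofReal] at hre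
  obtain ⟨hw, hv⟩ := eq_zero_of_bilin_eq_neg_sq_mul ha_pos hN hre
  intro i
  simpa [hv, hw, z] using congrFun hreal i

/-- (Lemma 4.2, case `n ≥ 3`.) Let `a` be a complex symmetric matrix whose real part is positive
definite, and `p(ξ) = aξ·ξ` (bilinear). For nonzero `ξ, N ∈ ℝⁿ`, the quadratic polynomial
`τ ↦ p(ξ + τN)` never admits a double root `τ₀` unless `ξ + τ₀N = 0`. -/
theorem no_double_root_dim_ge_three
    {n : ℕ} (hn : 3 ≤ n) (a : Matrix (Fin n) (Fin n) ℂ)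
    (ha_symm : ∀ i j, a i j = a j i)
    (ha_pos : ∀ ξ : Fin n → ℝ, ξ ≠ 0 → 0 < ∑ i, ∑ j, (a i j).re * ξ i * ξ j)
    (ξ N : Fin n → ℝ) (hξ : ξ ≠ 0) (hN : N ≠ 0) (τ₀ : ℂ)
    (hroot : (∑ i, ∑ j, a i j * ((ξ i : ℂ) + τ₀ * (N i : ℂ)) * ((ξ j : ℂ) + τ₀ * (N j : ℂ))) = 0)
    (hdouble : deriv (fun τ : ℂ =>
      ∑ i, ∑ j, a i j * ((ξ i : ℂ) + τ * (N i : ℂ)) * ((ξ j : ℂ) + τ * (N j : ℂ))) τ₀ = 0) :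
    ∀ i, (ξ i : ℂ) + τ₀ * (N i : ℂ) = 0 :=
  no_double_root_dim_ge_three_general a ha_pos ξ N hN τ₀ hroot hdouble
end

section
/- Let n = 2 and a ∈ Sym(2,ℂ) with Re(a) satisfying α₀|ξ|² ≤ ξ·Re(a)ξ for all ξ ∈ ℝ², some α₀ > 0. Suppose the quadratic form p(ξ) = aξ·ξ factors as p(ξ) = (l·ξ)² for some l = l_r + i l_i ∈ ℂ². Then Re(p(ξ)) = (l_r·ξ)² − (l_i·ξ)², which cannot be positive definite on ℝ²; hence p admits no such factorization and the quadratic τ ↦ p(ξ+τN) has no double root with ξ+τN ≠ 0 for ξ, N ∈ ℝ² \ {0}. -/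
/-! If `p(ξ) = (l·ξ)²`, then on real vectors `Re p = (l_r·ξ)² − (l_i·ξ)²`, which vanishes on the
nonzero kernel of `l_r − l_i` and so contradicts the coercivity of `Re a`.
If `τ₀ = u + iv` is a double root of `τ ↦ p(ξ + τN)`, then `p(ξ + τN) = p(N)(τ − τ₀)²`; at the real
vector `η = ξ + uN` this gives `Re p(η) = −Re p(N) v²`, and positivity of `Re p` forces `v = 0`
and `η = 0`. -/

open Complex Matrix

lemma quadratic_eq_mul_sub_sq_of_double_root {𝕜 : Type*} [NontriviallyNormedField 𝕜]
    {A B C τ₀ : 𝕜} (h0 : A * τ₀ ^ 2 + B * τ₀ + C = 0)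
    (h1 : deriv (fun τ => A * τ ^ 2 + B * τ + C) τ₀ = 0) (τ : 𝕜) :
    A * τ ^ 2 + B * τ + C = A * (τ - τ₀) ^ 2 := by
  have hderiv : HasDerivAt (fun τ => A * τ ^ 2 + B * τ + C) (A * (2 * τ₀) + B) τ₀ := by
    simpa using
      (((hasDerivAt_pow 2 τ₀).const_mul A).add ((hasDerivAt_id τ₀).const_mul B)).add_const C
  rw [hderiv.deriv] at h1
  linear_combination h0 + (τ - τ₀) * h1

section QuadForm

variable {n : Type*} [Fintype n]

def quadForm {R : Type*} [CommSemiring R] (a : Matrix n n R) (x : n → R) : R :=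
  ∑ i, ∑ j, a i j * x i * x j

lemma quadForm_add_mul {R : Type*} [CommRing R] (a : Matrix n n R) (x y : n → R) (τ : R) :
    quadForm a (fun i => x i + τ * y i)
      = quadForm a y * τ ^ 2 + (∑ i, ∑ j, a i j * (x i * y j + y i * x j)) * τ
        + quadForm a x := by
  simp only [quadForm, Finset.sum_mul, ← Finset.sum_add_distrib]
  refine Finset.sum_congr rfl fun i _ => Finset.sum_congr rfl fun j _ => ?_
  ring

lemma re_quadForm_ofReal (a : Matrix n n ℂ) (ξ : n → ℝ) :
    (quadForm a fun i => (ξ i : ℂ)).re = quadForm (a.map re) ξ := by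
  simp [quadForm, re_sum]

lemma quadForm_pos_of_coercive {b : Matrix n n ℝ} {α₀ : ℝ} (hα₀ : 0 < α₀)
    (hb : ∀ ξ : n → ℝ, α₀ * (∑ i, ξ i ^ 2) ≤ quadForm b ξ) {ξ : n → ℝ} (hξ : ξ ≠ 0) :
    0 < quadForm b ξ := by
  obtain ⟨i, hi⟩ := Function.ne_iff.mp hξ
  have hsum : 0 < ∑ i, ξ i ^ 2 :=
    Finset.sum_pos' (fun j _ => sq_nonneg (ξ j)) ⟨i, Finset.mem_univ i, sq_pos_of_ne_zero hi⟩
  exact (mul_pos hα₀ hsum).trans_le (hb ξ)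

lemma quadForm_nonneg_of_pos {b : Matrix n n ℝ} (hb : ∀ η : n → ℝ, η ≠ 0 → 0 < quadForm b η)
    (ξ : n → ℝ) : 0 ≤ quadForm b ξ := by
  rcases eq_or_ne ξ 0 with rfl | hξ
  · simp [quadForm]
  · exact (hb ξ hξ).le

lemma not_forall_pos_sq_sub_sq [Nontrivial n] (lr li : n → ℝ) :
    ¬ ∀ η : n → ℝ, η ≠ 0 → 0 < (lr ⬝ᵥ η) ^ 2 - (li ⬝ᵥ η) ^ 2 := by
  obtain ⟨η, hη, hzero⟩ := exists_ne_zero_dotProduct_eq_zero (lr - li)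
  rw [dotProduct_comm, sub_dotProduct, sub_eq_zero] at hzero
  intro h
  simpa [hzero] using h η hη

lemma re_quadForm_ofReal_of_eq_sq {a : Matrix n n ℂ} {l : n → ℂ}
    (hl : ∀ ξ : n → ℂ, quadForm a ξ = (l ⬝ᵥ ξ) ^ 2) (ξ : n → ℝ) :
    (quadForm a fun i => (ξ i : ℂ)).re
      = ((fun i => (l i).re) ⬝ᵥ ξ) ^ 2 - ((fun i => (l i).im) ⬝ᵥ ξ) ^ 2 := by
  simp [hl, sq, dotProduct, re_sum, im_sum]

lemma ofReal_add_mul_eq_zero_of_double_root {a : Matrix n n ℂ}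
    (hpos : ∀ η : n → ℝ, η ≠ 0 → 0 < quadForm (a.map re) η) {ξ N : n → ℝ} (hN : N ≠ 0)
    {τ₀ : ℂ} (h0 : quadForm a (fun i => (ξ i : ℂ) + τ₀ * N i) = 0)
    (h1 : deriv (fun τ : ℂ => quadForm a fun i => (ξ i : ℂ) + τ * N i) τ₀ = 0) (i : n) :
    (ξ i : ℂ) + τ₀ * N i = 0 := by
  have hsq : ∀ τ : ℂ, quadForm a (fun i => (ξ i : ℂ) + τ * N i)
      = quadForm a (fun i => (N i : ℂ)) * (τ - τ₀) ^ 2 := by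
    simp only [quadForm_add_mul] at h0 h1 ⊢
    exact quadratic_eq_mul_sub_sq_of_double_root h0 h1
  set η : n → ℝ := fun i => ξ i + τ₀.re * N i
  have hτ₀ : τ₀ = τ₀.re + τ₀.im * I := (re_add_im τ₀).symm
  have hη : quadForm a (fun i => (η i : ℂ))
      = -(quadForm a (fun i => (N i : ℂ)) * (τ₀.im ^ 2 : ℝ)) := by
    have h := hsq τ₀.re
    push_cast [η]
    rw [h]
    nth_rewrite 2 [hτ₀]
    linear_combination (quadForm a fun i => (N i : ℂ)) * (τ₀.im : ℂ) ^ 2 * I_sq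
  have hre : quadForm (a.map re) η = -(quadForm (a.map re) N * τ₀.im ^ 2) := by
    rw [← re_quadForm_ofReal, hη, neg_re, re_mul_ofReal, re_quadForm_ofReal]
  have him : τ₀.im = 0 := by
    have hN_pos := hpos N hN
    have hη_nonneg := quadForm_nonneg_of_pos hpos η
    have : τ₀.im ^ 2 = 0 := by nlinarith [sq_nonneg τ₀.im]
    exact pow_eq_zero_iff two_ne_zero |>.mp this
  have hη_zero : η = 0 := by
    by_contra hne
    simpa [hre, him] using hpos η hne
  rw [hτ₀, him]
  simp only [ofReal_zero, zero_mul, add_zero]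
  exact_mod_cast congrFun hη_zero i

end QuadForm

theorem no_double_root_dim_two_general
    (a : Matrix (Fin 2) (Fin 2) ℂ)
    (α₀ : ℝ) (hα₀ : 0 < α₀)
    (ha_ell : ∀ ξ : Fin 2 → ℝ, α₀ * (∑ i, ξ i ^ 2) ≤ ∑ i, ∑ j, (a i j).re * ξ i * ξ j) :
    (∀ l : Fin 2 → ℂ,
      (∀ ξ : Fin 2 → ℂ, (∑ i, ∑ j, a i j * ξ i * ξ j) = (∑ i, l i * ξ i) ^ 2) →
      ∀ ξ : Fin 2 → ℝ,
        (∑ i, ∑ j, a i j * (ξ i : ℂ) * (ξ j : ℂ)).re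
          = (∑ i, (l i).re * ξ i) ^ 2 - (∑ i, (l i).im * ξ i) ^ 2 ∧
        ¬ (∀ η : Fin 2 → ℝ, η ≠ 0 →
            0 < (∑ i, (l i).re * η i) ^ 2 - (∑ i, (l i).im * η i) ^ 2)) ∧
    (¬ ∃ l : Fin 2 → ℂ,
      ∀ ξ : Fin 2 → ℂ, (∑ i, ∑ j, a i j * ξ i * ξ j) = (∑ i, l i * ξ i) ^ 2) ∧
    (∀ ξ N : Fin 2 → ℝ, ξ ≠ 0 → N ≠ 0 → ∀ τ₀ : ℂ,
      (∑ i, ∑ j, a i j * ((ξ i : ℂ) + τ₀ * (N i : ℂ)) * ((ξ j : ℂ) + τ₀ * (N j : ℂ))) = 0 →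
      deriv (fun τ : ℂ =>
        ∑ i, ∑ j, a i j * ((ξ i : ℂ) + τ * (N i : ℂ)) * ((ξ j : ℂ) + τ * (N j : ℂ))) τ₀ = 0 →
      ∀ i, (ξ i : ℂ) + τ₀ * (N i : ℂ) = 0) := by
  have hpos (η : Fin 2 → ℝ) (hη : η ≠ 0) : 0 < quadForm (a.map re) η :=
    quadForm_pos_of_coercive hα₀ ha_ell hη
  refine ⟨fun l hl ξ => ⟨re_quadForm_ofReal_of_eq_sq hl ξ, not_forall_pos_sq_sub_sq _ _⟩, ?_, ?_⟩
  · rintro ⟨l, hl⟩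
    refine not_forall_pos_sq_sub_sq (fun i => (l i).re) (fun i => (l i).im) fun η hη => ?_
    have h := hpos η hη
    rwa [← re_quadForm_ofReal, re_quadForm_ofReal_of_eq_sq hl] at h
  · intro ξ N _ hN τ₀ h0 h1
    exact ofReal_add_mul_eq_zero_of_double_root hpos hN h0 h1

/-- (Lemma 4.2, case `n = 2`.) Let `a ∈ Sym(2,ℂ)` with `α₀|ξ|² ≤ ξ·Re(a)ξ` on `ℝ²` and
`p(ξ) = aξ·ξ`. If `p` factors as `p(ξ) = (l·ξ)²` then `Re p(ξ) = (l_r·ξ)² − (l_i·ξ)²` on `ℝ²`,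
which is not positive definite; hence no such factorization exists, and the quadratic
`τ ↦ p(ξ + τN)` has no double root `τ₀` with `ξ + τ₀N ≠ 0` for nonzero `ξ, N ∈ ℝ²`. -/
theorem no_double_root_dim_two
    (a : Matrix (Fin 2) (Fin 2) ℂ) (ha_symm : ∀ i j, a i j = a j i)
    (α₀ : ℝ) (hα₀ : 0 < α₀)
    (ha_ell : ∀ ξ : Fin 2 → ℝ, α₀ * (∑ i, ξ i ^ 2) ≤ ∑ i, ∑ j, (a i j).re * ξ i * ξ j) :
    (∀ l : Fin 2 → ℂ,
      (∀ ξ : Fin 2 → ℂ, (∑ i, ∑ j, a i j * ξ i * ξ j) = (∑ i, l i * ξ i) ^ 2) →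
      ∀ ξ : Fin 2 → ℝ,
        (∑ i, ∑ j, a i j * (ξ i : ℂ) * (ξ j : ℂ)).re
          = (∑ i, (l i).re * ξ i) ^ 2 - (∑ i, (l i).im * ξ i) ^ 2 ∧
        ¬ (∀ η : Fin 2 → ℝ, η ≠ 0 →
            0 < (∑ i, (l i).re * η i) ^ 2 - (∑ i, (l i).im * η i) ^ 2)) ∧
    (¬ ∃ l : Fin 2 → ℂ,
      ∀ ξ : Fin 2 → ℂ, (∑ i, ∑ j, a i j * ξ i * ξ j) = (∑ i, l i * ξ i) ^ 2) ∧
    (∀ ξ N : Fin 2 → ℝ, ξ ≠ 0 → N ≠ 0 → ∀ τ₀ : ℂ,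
      (∑ i, ∑ j, a i j * ((ξ i : ℂ) + τ₀ * (N i : ℂ)) * ((ξ j : ℂ) + τ₀ * (N j : ℂ))) = 0 →
      deriv (fun τ : ℂ =>
        ∑ i, ∑ j, a i j * ((ξ i : ℂ) + τ * (N i : ℂ)) * ((ξ j : ℂ) + τ * (N j : ℂ))) τ₀ = 0 →
      ∀ i, (ξ i : ℂ) + τ₀ * (N i : ℂ) = 0) :=
  no_double_root_dim_two_general a α₀ hα₀ ha_ell
end
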